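/- Sharing splits potential exactly: for all rich types τ, τ1, τ2 such that share τ as τ1, τ2, and every value v compatible with τ, the potentials φ(v : τ1) and φ(v : τ2) are defined and φ(v : τ) = φ(v : τ1) + φ(v : τ2). -/
import Mathlib


namespace RABC

/-- Program variables. -/
abbrev Var := String

/-! ### Rich types of the Resource-Aware Borrow Calculus (RABC) -/

/-- Rich types: τ ::= ⊥ | i32 | bool | list(α) | box(list(α)) | &s(τ) | &m(τc, τp),
with potential annotations α rational. `box α` denotes box(list(α)). -/
inductive RichType : Type
  | bot
  | i32
  | bool
  | list (α : ℚ)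
  | box (α : ℚ)
  | shared (τ : RichType)
  | mut (τc τp : RichType)

/-- Subtyping τ₁ ⪯ τ₂. -/
inductive Subty : RichType → RichType → Prop
  | bot (τ : RichType) : Subty .bot τ
  | i32 : Subty .i32 .i32
  | bool : Subty .bool .bool
  | list {α₁ α₂ : ℚ} : α₁ ≤ α₂ → Subty (.list α₁) (.list α₂)
  | box {α₁ α₂ : ℚ} : α₁ ≤ α₂ → Subty (.box α₁) (.box α₂)
  | shared {τ₁ τ₂ : RichType} : Subty τ₁ τ₂ → Subty (.shared τ₁) (.shared τ₂)
  | mut {τc₁ τp₁ τc₂ τp₂ : RichType} : Subty τc₁ τc₂ → Subty τp₂ τp₁ →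
      Subty (.mut τc₁ τp₁) (.mut τc₂ τp₂)

/-- Well-formedness ⊢ τ. -/
inductive WF : RichType → Prop
  | bot : WF .bot
  | i32 : WF .i32
  | bool : WF .bool
  | list {α : ℚ} : 0 ≤ α → WF (.list α)
  | box {α : ℚ} : 0 ≤ α → WF (.box α)
  | shared {τ : RichType} : WF τ → WF (.shared τ)
  | mut {τc τp : RichType} : Subty τp τc → WF τc → WF τp → WF (.mut τc τp)

/-! ### Meet and join (partial lattice operations, as relations) -/

mutual
/-- Meet τ₁ ∩ τ₂ = τ (partial). -/
inductive Meet : RichType → RichType → RichType → Prop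
  | i32 : Meet .i32 .i32 .i32
  | bool : Meet .bool .bool .bool
  | list (α₁ α₂ : ℚ) : Meet (.list α₁) (.list α₂) (.list (min α₁ α₂))
  | box (α₁ α₂ : ℚ) : Meet (.box α₁) (.box α₂) (.box (min α₁ α₂))
  | shared {τ₁ τ₂ τ : RichType} : Meet τ₁ τ₂ τ →
      Meet (.shared τ₁) (.shared τ₂) (.shared τ)
  | mut {τc₁ τp₁ τc₂ τp₂ τc τp : RichType} :
      Meet τc₁ τc₂ τc → Join τp₁ τp₂ τp → Subty τp₁ τc₁ → Subty τp₂ τc₂ →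
      Meet (.mut τc₁ τp₁) (.mut τc₂ τp₂) (.mut τc τp)

/-- Join τ₁ ∪ τ₂ = τ (partial). -/
inductive Join : RichType → RichType → RichType → Prop
  | i32 : Join .i32 .i32 .i32
  | bool : Join .bool .bool .bool
  | list (α₁ α₂ : ℚ) : Join (.list α₁) (.list α₂) (.list (max α₁ α₂))
  | box (α₁ α₂ : ℚ) : Join (.box α₁) (.box α₂) (.box (max α₁ α₂))
  | shared {τ₁ τ₂ τ : RichType} : Join τ₁ τ₂ τ →
      Join (.shared τ₁) (.shared τ₂) (.shared τ)
  | mut {τc₁ τp₁ τc₂ τp₂ τc τp : RichType} :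
      Join τc₁ τc₂ τc → Meet τp₁ τp₂ τp → Subty τp₁ τc₁ → Subty τp₂ τc₂ →
      Join (.mut τc₁ τp₁) (.mut τc₂ τp₂) (.mut τc τp)
end

/-! ### Sharing and prophesying -/

/-- share τ as τ₁, τ₂. -/
inductive Share : RichType → RichType → RichType → Prop
  | i32 : Share .i32 .i32 .i32
  | bool : Share .bool .bool .bool
  | list {α α₁ α₂ : ℚ} : α = α₁ + α₂ → Share (.list α) (.list α₁) (.list α₂)
  | box {α α₁ α₂ : ℚ} : α = α₁ + α₂ → Share (.box α) (.box α₁) (.box α₂)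
  | shared {τ τ₁ τ₂ : RichType} : Share τ τ₁ τ₂ →
      Share (.shared τ) (.shared τ₁) (.shared τ₂)

/-- prophesy τ as τp. -/
inductive Prophesy : RichType → RichType → Prop
  | i32 : Prophesy .i32 .i32
  | bool : Prophesy .bool .bool
  | list (α β : ℚ) : Prophesy (.list α) (.list β)
  | box (α β : ℚ) : Prophesy (.box α) (.box β)
  | shared {τ τ' : RichType} : Prophesy τ τ' → Prophesy (.shared τ) (.shared τ')
  | mut {τc τp τc' τp' : RichType} : Prophesy τc τc' → Prophesy τp τp' →
      Prophesy (.mut τc τp) (.mut τc' τp')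

/-! ### Places and values -/

/-- Places p ::= x | *p. -/
inductive Place : Type
  | var (x : Var)
  | deref (p : Place)

/-- List values lv ::= nil | cons(n, box(lv)) (the box is kept implicit in `cons`). -/
inductive ListVal : Type
  | nil
  | cons (n : ℤ) (tl : ListVal)

/-- Values v ::= ⊥ | n | true | false | lv | box(lv) | &(p, v). -/
inductive Val : Type
  | bot
  | int (n : ℤ)
  | tt
  | ff
  | list (lv : ListVal)
  | box (lv : ListVal)
  | borrow (p : Place) (v : Val)

/-! ### Potential functions -/

/-- Potential of a list value with per-element annotation α. -/
def phiList : ListVal → ℚ → ℚ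
  | .nil, _ => 0
  | .cons _ tl, α => α + phiList tl α

/-- The (partial) potential function φ(v : τ); `none` means undefined.
A value `v` is *compatible* with `τ` when `phi v τ` is `some _`. -/
def phi : Val → RichType → Option ℚ
  | _, .bot => some 0
  | .int _, .i32 => some 0
  | .tt, .bool => some 0
  | .ff, .bool => some 0
  | .list lv, .list α => some (phiList lv α)
  | .box lv, .box α => some (phiList lv α)
  | .borrow _ v, .shared τ => phi v τ
  | .borrow _ v, .mut τc τp =>
      match phi v τc, phi v τp with
      | some a, some b => some (a - b)
      | _, _ => none
  | _, _ => none

/-! ### Typing contexts and stores -/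

/-- A typing context: a finite map from program variables to rich types. -/
abbrev Ctx := Finmap (fun _ : Var => RichType)

/-- A store: a finite map from program variables to values. -/
abbrev Store := Finmap (fun _ : Var => Val)

/-- Lift an optional rational to `WithBot ℚ` (⊥ = undefined). -/
def optQ : Option ℚ → WithBot ℚ
  | none => ⊥
  | some q => (q : WithBot ℚ)

/-- Potential contributed by one variable. -/
def phiVar (V : Store) (Γ : Ctx) (x : Var) : WithBot ℚ :=
  match V.lookup x, Γ.lookup x with
  | some v, some τ => optQ (phi v τ)
  | _, _ => ⊥

/-- Potential of a store under a context: Φ(V : Γ) = Σ_{x ∈ dom Γ} φ(V(x) : Γ(x)).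
It is defined (≠ ⊥) exactly when each summand is defined. -/
def PhiCtx (V : Store) (Γ : Ctx) : WithBot ℚ :=
  Γ.keys.sum (phiVar V Γ)

/-- Subcontext relation Γ₁ ⊆ Γ₂. -/
def SubCtx (Γ₁ Γ₂ : Ctx) : Prop :=
  ∀ x τ₁, Γ₁.lookup x = some τ₁ → ∃ τ₂, Γ₂.lookup x = some τ₂ ∧ Subty τ₁ τ₂

/-- Context well-formedness ⊢ Γ. -/
def WFCtx (Γ : Ctx) : Prop := ∀ x τ, Γ.lookup x = some τ → WF τ

/-- Context extension Γ₁ ⊑ Γ₂. -/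
def CtxExt (Γ₁ Γ₂ : Ctx) : Prop :=
  ∀ x τ, Γ₁.lookup x = some τ → Γ₂.lookup x = some τ

/-- Context merging Γ₁ ⊓ Γ₂ = Γ (partial): dom(Γ₁) = dom(Γ₂) = dom(Γ) and
pointwise meet. -/
def CtxMerge (Γ₁ Γ₂ Γ : Ctx) : Prop :=
  Γ₂.keys = Γ₁.keys ∧ Γ.keys = Γ₁.keys ∧
  ∀ x ∈ Γ₁.keys, ∃ τ₁ τ₂ τ, Γ₁.lookup x = some τ₁ ∧ Γ₂.lookup x = some τ₂ ∧
    Γ.lookup x = some τ ∧ Meet τ₁ τ₂ τ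

/-! ### Store and context reading/writing -/

/-- Store reading V ⊢ p ⇝ v. -/
inductive VRead : Store → Place → Val → Prop
  | var {V : Store} {x : Var} {v : Val} : V.lookup x = some v → VRead V (.var x) v
  | box {V : Store} {p : Place} {lv : ListVal} :
      VRead V p (.box lv) → VRead V (.deref p) (.list lv)
  | borrow {V : Store} {p q : Place} {v : Val} :
      VRead V p (.borrow q v) → VRead V (.deref p) v

/-- Store writing ⟨V | p ← v⟩ = V'. -/
inductive VWrite : Store → Place → Val → Store → Prop
  | var {V : Store} {x : Var} {v : Val} : VWrite V (.var x) v (V.insert x v)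
  | box {V V' : Store} {p : Place} {lv lv' : ListVal} :
      VRead V p (.box lv) → VWrite V p (.box lv') V' →
      VWrite V (.deref p) (.list lv') V'
  | borrow {V V₁ V' : Store} {p q : Place} {w v : Val} :
      VRead V p (.borrow q w) → VWrite V q v V₁ → VWrite V₁ p (.borrow q v) V' →
      VWrite V (.deref p) v V'

/-- Context reading Γ ⊢ p ↪ τ. -/
inductive GRead : Ctx → Place → RichType → Prop
  | var {Γ : Ctx} {x : Var} {τ : RichType} : Γ.lookup x = some τ → GRead Γ (.var x) τ
  | box {Γ : Ctx} {p : Place} {α : ℚ} :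
      GRead Γ p (.box α) → GRead Γ (.deref p) (.list α)
  | shared {Γ : Ctx} {p : Place} {τ : RichType} :
      GRead Γ p (.shared τ) → GRead Γ (.deref p) τ
  | mut {Γ : Ctx} {p : Place} {τc τp : RichType} :
      GRead Γ p (.mut τc τp) → GRead Γ (.deref p) τc

/-- Context writing ⟨Γ | p ← τ⟩ = Γ'. -/
inductive GWrite : Ctx → Place → RichType → Ctx → Prop
  | var {Γ : Ctx} {x : Var} {τ : RichType} : GWrite Γ (.var x) τ (Γ.insert x τ)
  | box {Γ Γ' : Ctx} {p : Place} {β α : ℚ} :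
      GRead Γ p (.box β) → GWrite Γ p (.box α) Γ' →
      GWrite Γ (.deref p) (.list α) Γ'
  | shared {Γ Γ' : Ctx} {p : Place} {σ τ : RichType} :
      GRead Γ p (.shared σ) → GWrite Γ p (.shared τ) Γ' →
      GWrite Γ (.deref p) τ Γ'
  | mut {Γ Γ' : Ctx} {p : Place} {τc τp τ : RichType} :
      GRead Γ p (.mut τc τp) → WF τc → GWrite Γ p (.mut τ τp) Γ' →
      GWrite Γ (.deref p) τ Γ'

/-- Consistency of a store with a typing context (as guaranteed for
well-borrowed Rust programs): the borrow graph is acyclic, places holding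
borrow values are typed by borrow (in particular, mutably written ones by
mutable-borrow) types, and prophecy components agree with borrowed places. -/
structure Consistent (V : Store) (Γ : Ctx) : Prop where
  acyclic : WellFounded (fun q p : Place => ∃ v, VRead V p (Val.borrow q v))
  borrowTyped : ∀ p q v τ, VRead V p (.borrow q v) → GRead Γ p τ →
      (∃ τc τp, τ = .mut τc τp) ∨ (∃ σ, τ = .shared σ)
  prophecyTyped : ∀ p q v τc τp, VRead V p (.borrow q v) →
      GRead Γ p (.mut τc τp) → GRead Γ q τp

/-! ### Expressions -/

/-- Expressions e ::= n | true | false | nil | box(e) | e₁ op e₂ |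
copy p | move p | &s p | &m p. -/
inductive Expr : Type
  | int (n : ℤ)
  | tt
  | ff
  | nil
  | box (e : Expr)
  | binop (op : ℤ → ℤ → ℤ) (e₁ e₂ : Expr)
  | copy (p : Place)
  | move (p : Place)
  | borrowS (p : Place)
  | borrowM (p : Place)

/-- Expression evaluation V ⊢ e ⇝ v. -/
inductive EvalE : Store → Expr → Val → Prop
  | int {V : Store} {n : ℤ} : EvalE V (.int n) (.int n)
  | tt {V : Store} : EvalE V .tt .tt
  | ff {V : Store} : EvalE V .ff .ff
  | nil {V : Store} : EvalE V .nil (.list .nil)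
  | box {V : Store} {e : Expr} {lv : ListVal} :
      EvalE V e (.list lv) → EvalE V (.box e) (.box lv)
  | binop {V : Store} {op : ℤ → ℤ → ℤ} {e₁ e₂ : Expr} {n₁ n₂ : ℤ} :
      EvalE V e₁ (.int n₁) → EvalE V e₂ (.int n₂) →
      EvalE V (.binop op e₁ e₂) (.int (op n₁ n₂))
  | copy {V : Store} {p : Place} {v : Val} : VRead V p v → EvalE V (.copy p) v
  | move {V : Store} {p : Place} {v : Val} : VRead V p v → EvalE V (.move p) v
  | borrowS {V : Store} {p : Place} {v : Val} :
      VRead V p v → EvalE V (.borrowS p) (.borrow p v)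
  | borrowM {V : Store} {p : Place} {v : Val} :
      VRead V p v → EvalE V (.borrowM p) (.borrow p v)

/-- Expression typing Γ ⊢ e ↪ τ ⊣ Γ'. -/
inductive TyE : Ctx → Expr → RichType → Ctx → Prop
  | int {Γ : Ctx} {n : ℤ} : TyE Γ (.int n) .i32 Γ
  | tt {Γ : Ctx} : TyE Γ .tt .bool Γ
  | ff {Γ : Ctx} : TyE Γ .ff .bool Γ
  | nil {Γ : Ctx} (α : ℚ) : TyE Γ .nil (.list α) Γ
  | box {Γ Γ' : Ctx} {e : Expr} {α : ℚ} :
      TyE Γ e (.list α) Γ' → TyE Γ (.box e) (.box α) Γ'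
  | binop {Γ : Ctx} {op : ℤ → ℤ → ℤ} {e₁ e₂ : Expr} :
      TyE Γ e₁ .i32 Γ → TyE Γ e₂ .i32 Γ → TyE Γ (.binop op e₁ e₂) .i32 Γ
  | copy {Γ : Ctx} {p : Place} {τ : RichType} :
      GRead Γ p τ → (τ = .i32 ∨ τ = .bool) → TyE Γ (.copy p) τ Γ
  | move {Γ Γ' : Ctx} {p : Place} {τ : RichType} :
      GRead Γ p τ → GWrite Γ p .bot Γ' → TyE Γ (.move p) τ Γ'
  | borrowS {Γ Γ' : Ctx} {p : Place} {τ τ₁ τ₂ : RichType} :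
      GRead Γ p τ → Share τ τ₁ τ₂ → GWrite Γ p τ₁ Γ' →
      TyE Γ (.borrowS p) (.shared τ₂) Γ'
  | borrowM {Γ Γ' : Ctx} {p : Place} {τ τp : RichType} :
      GRead Γ p τ → Prophesy τ τp → GWrite Γ p τp Γ' →
      TyE Γ (.borrowM p) (.mut τ τp) Γ'

/-! ### Statements, programs, statement typing and execution -/

/-- Statements of RABC. -/
inductive Stmt : Type
  | tick (δ : ℚ)
  | ret
  | seq (s₁ s₂ : Stmt)
  | drop (p : Place)
  | ite (p : Place) (s₁ s₂ : Stmt)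
  | matchList (p : Place) (s₁ : Stmt) (xhd xtl : Var) (s₂ : Stmt)
  | assign (p : Place) (e : Expr)
  | assignCons (p : Place) (e₁ e₂ : Expr)
  | call (p : Place) (f : Var) (args : List Expr)

/-- A top-level function fn f (params, locals, ret) { body }. -/
structure FnDecl : Type where
  params : List Var
  locals : List Var
  ret : Var
  body : Stmt

/-- A program maps function names to declarations. -/
abbrev Prog := Var → Option FnDecl

/-- Typing a list of argument expressions left to right. -/
inductive TyArgs : Ctx → List Expr → List RichType → Ctx → Prop
  | nil {Γ : Ctx} : TyArgs Γ [] [] Γ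
  | cons {Γ Γ' Γ'' : Ctx} {e : Expr} {es : List Expr} {τ : RichType}
      {τs : List RichType} :
      TyE Γ e τ Γ' → TyArgs Γ' es τs Γ'' → TyArgs Γ (e :: es) (τ :: τs) Γ''

mutual
/-- Statement typing Γ ⊢ s ↪^δ ⊣ Γ'. -/
inductive TyS (P : Prog) : Ctx → Stmt → ℚ → Ctx → Prop
  | tick {Γ : Ctx} {δ : ℚ} : TyS P Γ (.tick δ) δ Γ
  | ret {Γ : Ctx} : TyS P Γ .ret 0 Γ
  | seq {Γ Γ₁ Γ₂ : Ctx} {s₁ s₂ : Stmt} {δ₁ δ₂ : ℚ} :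
      TyS P Γ s₁ δ₁ Γ₁ → TyS P Γ₁ s₂ δ₂ Γ₂ → TyS P Γ (.seq s₁ s₂) (δ₁ + δ₂) Γ₂
  | drop {Γ Γ' : Ctx} {p : Place} {τ : RichType} :
      GRead Γ p τ → WF τ → GWrite Γ p .bot Γ' → TyS P Γ (.drop p) 0 Γ'
  | assign {Γ Γ₁ Γ' : Ctx} {p : Place} {e : Expr} {τ τ' : RichType} :
      TyE Γ e τ' Γ₁ → GRead Γ₁ p τ → WF τ → GWrite Γ₁ p τ' Γ' →
      TyS P Γ (.assign p e) 0 Γ'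
  | assignCons {Γ Γ₁ Γ₂ Γ' : Ctx} {p : Place} {e₁ e₂ : Expr} {α : ℚ} :
      TyE Γ e₁ .i32 Γ₁ → TyE Γ₁ e₂ (.box α) Γ₂ → GWrite Γ₂ p (.list α) Γ' →
      TyS P Γ (.assignCons p e₁ e₂) α Γ'
  | ite {Γ Γ₁ Γ₂ Γ' : Ctx} {p : Place} {s₁ s₂ : Stmt} {δ₁ δ₂ : ℚ} :
      GRead Γ p .bool → TyS P Γ s₁ δ₁ Γ₁ → TyS P Γ s₂ δ₂ Γ₂ →
      CtxMerge Γ₁ Γ₂ Γ' → TyS P Γ (.ite p s₁ s₂) (max δ₁ δ₂) Γ'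
  | matchList {Γ Γ₁ Γb1 Γb2 Γb Γb' Γd1 Γd2 Γ₂ Γ' : Ctx} {p : Place}
      {s₁ s₂ : Stmt} {xhd xtl : Var} {α β δ₁ δ₂ : ℚ} :
      GRead Γ p (.list α) →
      TyS P Γ s₁ δ₁ Γ₁ →
      GWrite Γ p .bot Γb1 →
      GWrite Γb1 (.var xhd) .i32 Γb2 →
      GWrite Γb2 (.var xtl) (.box α) Γb →
      TyS P Γb s₂ δ₂ Γb' →
      GRead Γb' (.var xtl) (.list β) →
      GWrite Γb' (.var xhd) .bot Γd1 →
      GWrite Γd1 (.var xtl) .bot Γd2 →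
      GWrite Γd2 p (.list β) Γ₂ →
      CtxMerge Γ₁ Γ₂ Γ' →
      TyS P Γ (.matchList p s₁ xhd xtl s₂) (max δ₁ (δ₂ - (α - β))) Γ'
  | call {Γ Γn Γ' Γf : Ctx} {p : Place} {f : Var} {es : List Expr}
      {τs : List RichType} {τ τret : RichType} {d : FnDecl} {δf : ℚ} :
      P f = some d →
      FnChecked P f Γf δf →
      Γf.lookup d.ret = some τret →
      List.Forall₂ (fun x τp => Γf.lookup x = some τp) d.params τs →
      TyArgs Γ es τs Γn →
      GRead Γn p τ → WF τ →
      GWrite Γn p τret Γ' →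
      TyS P Γ (.call p f es) δf Γ'

/-- Well-checked function signature ⊢ f ⇐ (Γ_f, δ_f). -/
inductive FnChecked (P : Prog) : Var → Ctx → ℚ → Prop
  | mk {f : Var} {d : FnDecl} {Γf Γf' : Ctx} {δf : ℚ} :
      P f = some d →
      (∀ x, x ∈ d.params ++ d.locals ++ [d.ret] → (Γf.lookup x).isSome) →
      TyS P Γf d.body δf Γf' →
      (∀ x τ, Γf'.lookup x = some τ → WF τ) →
      Γf'.lookup d.ret = Γf.lookup d.ret →
      FnChecked P f Γf δf
end

/-- Writing ⊥ to a list of variables in order. -/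
inductive WriteBots : Store → List Var → Store → Prop
  | nil {V : Store} : WriteBots V [] V
  | cons {V V' : Store} {x : Var} {xs : List Var} :
      WriteBots (V.insert x .bot) xs V' → WriteBots V (x :: xs) V'

/-- Writing a list of values to a list of variables in order. -/
inductive WriteVars : Store → List Var → List Val → Store → Prop
  | nil {V : Store} : WriteVars V [] [] V
  | cons {V V' : Store} {x : Var} {xs : List Var} {v : Val} {vs : List Val} :
      WriteVars (V.insert x v) xs vs V' → WriteVars V (x :: xs) (v :: vs) V'

/-- Resource-aware big-step semantics V ⊢ s ⇝^δ ⊣ V'. -/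
inductive ExecS (P : Prog) : Store → Stmt → ℚ → Store → Prop
  | tick {V : Store} {δ : ℚ} : ExecS P V (.tick δ) δ V
  | ret {V : Store} : ExecS P V .ret 0 V
  | seq {V V₁ V₂ : Store} {s₁ s₂ : Stmt} {δ₁ δ₂ : ℚ} :
      ExecS P V s₁ δ₁ V₁ → ExecS P V₁ s₂ δ₂ V₂ →
      ExecS P V (.seq s₁ s₂) (δ₁ + δ₂) V₂
  | drop {V : Store} {p : Place} : ExecS P V (.drop p) 0 V
  | assign {V V' : Store} {p : Place} {e : Expr} {v : Val} :
      EvalE V e v → VWrite V p v V' → ExecS P V (.assign p e) 0 V'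
  | assignCons {V V' : Store} {p : Place} {e₁ e₂ : Expr} {n : ℤ} {lv : ListVal} :
      EvalE V e₁ (.int n) → EvalE V e₂ (.box lv) →
      VWrite V p (.list (.cons n lv)) V' → ExecS P V (.assignCons p e₁ e₂) 0 V'
  | iteTrue {V V' : Store} {p : Place} {s₁ s₂ : Stmt} {δ : ℚ} :
      VRead V p .tt → ExecS P V s₁ δ V' → ExecS P V (.ite p s₁ s₂) δ V'
  | iteFalse {V V' : Store} {p : Place} {s₁ s₂ : Stmt} {δ : ℚ} :
      VRead V p .ff → ExecS P V s₂ δ V' → ExecS P V (.ite p s₁ s₂) δ V'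
  | matchNil {V V' : Store} {p : Place} {s₁ s₂ : Stmt} {xhd xtl : Var} {δ : ℚ} :
      VRead V p (.list .nil) → ExecS P V s₁ δ V' →
      ExecS P V (.matchList p s₁ xhd xtl s₂) δ V'
  | matchCons {V V₁ V₂ Vb Vb' Vd1 Vd2 V' : Store} {p : Place} {s₁ s₂ : Stmt}
      {xhd xtl : Var} {δ : ℚ} {n n' : ℤ} {tl tl' : ListVal} :
      VRead V p (.list (.cons n tl)) →
      VWrite V p .bot V₁ →
      VWrite V₁ (.var xhd) (.int n) V₂ →
      VWrite V₂ (.var xtl) (.box tl) Vb →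
      ExecS P Vb s₂ δ Vb' →
      VRead Vb' (.var xhd) (.int n') →
      VRead Vb' (.var xtl) (.box tl') →
      VWrite Vb' (.var xhd) .bot Vd1 →
      VWrite Vd1 (.var xtl) .bot Vd2 →
      VWrite Vd2 p (.list (.cons n' tl')) V' →
      ExecS P V (.matchList p s₁ xhd xtl s₂) δ V'
  | call {V V₁ V₂ Vb' Vd1 Vd2 V' : Store} {p : Place} {f : Var}
      {es : List Expr} {vs : List Val} {vret : Val} {d : FnDecl} {δ : ℚ} :
      P f = some d →
      List.Forall₂ (EvalE V) es vs →
      WriteVars V d.params vs V₁ →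
      WriteBots V₁ d.locals V₂ →
      ExecS P (V₂.insert d.ret .bot) d.body δ Vb' →
      VRead Vb' (.var d.ret) vret →
      WriteBots Vb' d.params Vd1 →
      WriteBots Vd1 d.locals Vd2 →
      VWrite (Vd2.insert d.ret .bot) p vret V' →
      ExecS P V (.call p f es) δ V'

lemma phiList_add (lv : ListVal) (α₁ α₂ : ℚ) :
    phiList lv (α₁ + α₂) = phiList lv α₁ + phiList lv α₂ := by
  induction lv with
  | nil => simp [phiList]
  | cons n tl ih => simp [phiList, ih]; ring

/-- Sharing splits potential exactly: if share τ as τ₁, τ₂ and v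
is compatible with τ, then φ(v:τ₁) and φ(v:τ₂) are defined and
φ(v:τ) = φ(v:τ₁) + φ(v:τ₂). -/
theorem share_phi (τ τ₁ τ₂ : RichType) (v : Val) (q : ℚ)
    (hs : Share τ τ₁ τ₂) (h : phi v τ = some q) :
    ∃ q₁ q₂ : ℚ, phi v τ₁ = some q₁ ∧ phi v τ₂ = some q₂ ∧ q = q₁ + q₂ := by
  induction hs generalizing v q with
  | i32 => cases v <;> simp_all [phi]
  | bool => cases v <;> simp_all [phi]
  | list hα =>
      cases v <;> simp_all [phi]
      subst hα h
      exact phiList_add _ _ _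
  | box hα =>
      cases v <;> simp_all [phi]
      subst hα h
      exact phiList_add _ _ _
  | shared _ ih =>
      cases v <;> simp_all [phi]

end RABC
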